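/- Let |GHZₙ⟩ be the n-qubit GHZ state with n ≥ 3 parties A^(1),…,A^(n). With observables A₀^(1) = A₀^(n) = Z, A₁^(i) = X for 1 ≤ i ≤ n−1, A₁^(n) = (X+Z)/√2, A₂^(n) = (X−Z)/√2, the quantity ⟨A₁^(1)⋯A₁^(n−1)A₁^(n)⟩ + ⟨A₁^(1)⋯A₁^(n−1)A₂^(n)⟩ + ⟨A₀^(1)A₁^(n)⟩ − ⟨A₀^(1)A₂^(n)⟩ + 2⟨A₀^(1)A₀^(n)⟩ evaluated on |GHZₙ⟩ equals 2√2 + 2, which exceeds 4. -/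

import Mathlib

/-!
Since |GHZₙ⟩ is supported on |0…0⟩ and |1…1⟩ with amplitude 1/√2 each, the expectation of
A₁ ⊗ ⋯ ⊗ Aₙ is half the sum of the four "corner" products ∏ Aᵢ(a, b) with a, b ∈ {0, 1}.
A string of X's keeps only the off-diagonal corners and a Z on the first site only the diagonal
ones, so each of the four mixed terms equals 1/√2, while ⟨Z Z⟩ = 1; the total is 4/√2 + 2.
-/

open Matrix

noncomputable section

def PZ : Matrix (Fin 2) (Fin 2) ℂ := !![1, 0; 0, -1]
def PX : Matrix (Fin 2) (Fin 2) ℂ := !![0, 1; 1, 0]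

/-- The n-qubit GHZ state (|0…0⟩ + |1…1⟩)/√2. -/
def GHZ (n : ℕ) : (Fin n → Fin 2) → ℂ := fun f =>
  ((Real.sqrt 2 : ℂ))⁻¹ *
    (if (∀ i, f i = 0) then 1 else if (∀ i, f i = 1) then 1 else 0)

/-- Expectation ⟨ψ, (A 0 ⊗ ⋯ ⊗ A (n-1)) ψ⟩ of a product of single-site observables. -/
def expValN {n : ℕ} (ψ : (Fin n → Fin 2) → ℂ)
    (A : Fin n → Matrix (Fin 2) (Fin 2) ℂ) : ℂ :=
  ∑ f : Fin n → Fin 2, ∑ g : Fin n → Fin 2,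
    star (ψ f) * (∏ i, A i (f i) (g i)) * ψ g

lemma GHZ_apply {n : ℕ} (hn : 0 < n) (f : Fin n → Fin 2) :
    GHZ n f = (Real.sqrt 2 : ℂ)⁻¹ *
      ((if f = fun _ => 0 then 1 else 0) + (if f = fun _ => 1 then 1 else 0)) := by
  have hi : Nonempty (Fin n) := ⟨⟨0, hn⟩⟩
  unfold GHZ
  split_ifs <;> simp_all [funext_iff]

lemma expValN_GHZ {n : ℕ} (hn : 0 < n) (A : Fin n → Matrix (Fin 2) (Fin 2) ℂ) :
    expValN (GHZ n) A =
      ((∏ i, A i 0 0) + (∏ i, A i 0 1) + (∏ i, A i 1 0) + (∏ i, A i 1 1)) / 2 := by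
  have hc : (((Real.sqrt 2)⁻¹ : ℝ) : ℂ) * (((Real.sqrt 2)⁻¹ : ℝ) : ℂ) = 2⁻¹ := by
    rw [← Complex.ofReal_mul, ← mul_inv, Real.mul_self_sqrt zero_le_two]; push_cast; rfl
  simp only [expValN, GHZ_apply hn, ← Complex.ofReal_inv, Complex.star_def,
    Complex.conj_ofReal, map_add, apply_ite (starRingEnd ℂ), map_zero, mul_add, add_mul,
    mul_ite, ite_mul, mul_one, mul_zero, zero_mul, Finset.sum_add_distrib, Finset.sum_ite_eq',
    Finset.mem_univ, if_true]
  linear_combination ((∏ i, A i 0 0) + (∏ i, A i 0 1) + (∏ i, A i 1 0) + (∏ i, A i 1 1)) * hc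

lemma expValN_GHZ_PX_init_M_last {n : ℕ} (hn : 2 ≤ n) (M : Matrix (Fin 2) (Fin 2) ℂ) :
    expValN (GHZ n) (fun i => if i.val < n - 1 then PX else M) = (M 0 1 + M 1 0) / 2 := by
  have hlast : ∀ a b,
      ∏ i : Fin n, (if i.val < n - 1 then PX else M) a b = PX a b ^ (n - 1) * M a b := by
    obtain ⟨m, rfl⟩ : ∃ m, n = m + 1 := ⟨n - 1, by omega⟩
    intro a b
    simp [Fin.prod_univ_castSucc]
  rw [expValN_GHZ (by omega), hlast, hlast, hlast, hlast]
  simp [PX, show n - 1 ≠ 0 by omega]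

lemma expValN_GHZ_PZ_head_M_last {n : ℕ} (hn : 2 ≤ n) (M : Matrix (Fin 2) (Fin 2) ℂ) :
    expValN (GHZ n) (fun i => if i.val = 0 then PZ else if i.val = n - 1 then M else 1) =
      (M 0 0 - M 1 1) / 2 := by
  have hdiag : ∀ a, ∏ i : Fin n, (if i.val = 0 then PZ else if i.val = n - 1 then M else 1) a a
      = PZ a a * M a a := by
    intro a
    rw [Fintype.prod_eq_mul (⟨0, by omega⟩ : Fin n) ⟨n - 1, by omega⟩ (Fin.ne_of_val_ne (by simp only; omega))]
    · simp [show n - 1 ≠ 0 by omega]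
    · rintro i ⟨h0, hl⟩
      simp only [ne_eq, Fin.ext_iff] at h0 hl
      simp [h0, hl]
  have hoff : ∀ a b, PZ a b = 0 →
      ∏ i : Fin n, (if i.val = 0 then PZ else if i.val = n - 1 then M else 1) a b = 0 :=
    fun a b hab => Finset.prod_eq_zero (Finset.mem_univ ⟨0, by omega⟩) (by simpa using hab)
  rw [expValN_GHZ (by omega), hdiag, hdiag, hoff 0 1 (by simp [PZ]), hoff 1 0 (by simp [PZ])]
  simp [PZ, ← sub_eq_add_neg]

theorem stmt_8 (n : ℕ) (hn : 3 ≤ n) :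
    expValN (GHZ n) (fun i => if i.val < n - 1 then PX
        else (Real.sqrt 2 : ℂ)⁻¹ • (PX + PZ))
    + expValN (GHZ n) (fun i => if i.val < n - 1 then PX
        else (Real.sqrt 2 : ℂ)⁻¹ • (PX - PZ))
    + expValN (GHZ n) (fun i => if i.val = 0 then PZ
        else if i.val = n - 1 then (Real.sqrt 2 : ℂ)⁻¹ • (PX + PZ) else 1)
    - expValN (GHZ n) (fun i => if i.val = 0 then PZ
        else if i.val = n - 1 then (Real.sqrt 2 : ℂ)⁻¹ • (PX - PZ) else 1)
    + 2 * expValN (GHZ n) (fun i => if i.val = 0 ∨ i.val = n - 1 then PZ else 1)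
      = ((2 * Real.sqrt 2 + 2 : ℝ) : ℂ) ∧ (2 * Real.sqrt 2 + 2 : ℝ) > 4 := by
  have hn2 : 2 ≤ n := by omega
  -- puts ⟨Z Z⟩ in the shape of `expValN_GHZ_PZ_head_M_last` with `M = PZ`
  simp only [ite_or]
  rw [expValN_GHZ_PX_init_M_last hn2, expValN_GHZ_PX_init_M_last hn2,
    expValN_GHZ_PZ_head_M_last hn2, expValN_GHZ_PZ_head_M_last hn2,
    expValN_GHZ_PZ_head_M_last hn2]
  refine ⟨?_, by linarith [Real.one_lt_sqrt_two]⟩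
  have hsqrt : (Real.sqrt 2 : ℂ) ^ 2 = 2 := by
    rw [← Complex.ofReal_pow, Real.sq_sqrt zero_le_two]; push_cast; rfl
  simp only [PX, PZ, Matrix.smul_apply, Matrix.add_apply, Matrix.sub_apply, of_apply,
    cons_val', cons_val_zero, cons_val_one, cons_val_fin_one, smul_eq_mul]
  push_cast
  field_simp
  linear_combination -4 * hsqrt

end
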